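/- If G is a graph in the family 𝓑 that is constructed from the base graph by k − 1 applications of the operation O_1 (where k ≥ 1), then i(G) = 2k + 1, w(G) = 16k + 6, and consequently 8·i(G) = w(G) + 2. -/

import Mathlib

namespace PaperIndepDom

open SimpleGraph

/-- The degree of a vertex `v` in a graph `G`. -/
noncomputable def deg {V : Type*} (G : SimpleGraph V) (v : V) : ℕ :=
  (G.neighborSet v).ncard

/-- A set `S` is an independent dominating set of `G`. -/
def IsIDSet {V : Type*} (G : SimpleGraph V) (S : Set V) : Prop :=
  (∀ u ∈ S, ∀ v ∈ S, ¬ G.Adj u v) ∧ ∀ v, v ∉ S → ∃ u ∈ S, G.Adj u v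

/-- The independent domination number `i(G)`. -/
noncomputable def iNum {V : Type*} (G : SimpleGraph V) : ℕ :=
  sInf {n | ∃ S : Set V, IsIDSet G S ∧ S.ncard = n}

/-- The number `n_j(G)` of vertices of degree `j` in `G`. -/
noncomputable def nDeg {V : Type*} (G : SimpleGraph V) (j : ℕ) : ℕ :=
  {v | deg G v = j}.ncard

/-- The vertex weight `w(G) = 8·n₀(G) + 5·n₁(G) + 4·n₂(G) + 3·n₃(G)`. -/
noncomputable def weight {V : Type*} (G : SimpleGraph V) : ℕ :=
  8 * nDeg G 0 + 5 * nDeg G 1 + 4 * nDeg G 2 + 3 * nDeg G 3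

/-- The base graph `B₁`: a copy of `K_{2,3}` (vertices `0, 1` forming the partite set of
size 2, vertices `2, 3, 4` forming the partite set of size 3) together with a new root
vertex `5` joined to the degree-2 vertex `2`. -/
def baseGraph : SimpleGraph (Fin 6) :=
  SimpleGraph.fromRel (fun i j =>
    (i.val ≤ 1 ∧ 2 ≤ j.val ∧ j.val ≤ 4) ∨ (i = 2 ∧ j = 5))

/-- The graph obtained from `G` by adding a vertex-disjoint copy of `K_{2,3}`
(on the vertex set `Fin 2 ⊕ Fin 3`) together with an edge joining the vertex `v'` of `G`
to the degree-2 vertex `Sum.inr t` of the added copy of `K_{2,3}` (operation `O₁`). -/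
def addK23 {V : Type*} (G : SimpleGraph V) (v' : V) (t : Fin 3) :
    SimpleGraph (V ⊕ (Fin 2 ⊕ Fin 3)) :=
  SimpleGraph.fromRel (fun x y =>
    (∃ a b, G.Adj a b ∧ x = Sum.inl a ∧ y = Sum.inl b) ∨
    (∃ i j, x = Sum.inr (Sum.inl i) ∧ y = Sum.inr (Sum.inr j)) ∨
    (x = Sum.inl v' ∧ y = Sum.inr (Sum.inr t)))

/-- `FamilyBk k G` means that `G` belongs to the family `𝓑` and is obtained (up to
isomorphism) from the base graph by `k − 1` applications of the operation `O₁`;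
equivalently, `G ∈ 𝓑` contains exactly `k` vertex-disjoint copies of `K_{2,3}`. -/
inductive FamilyBk : ℕ → ∀ {V : Type}, SimpleGraph V → Prop
  | base : FamilyBk 1 baseGraph
  | extend {k : ℕ} {V : Type} {G : SimpleGraph V} (hG : FamilyBk k G) (v' : V)
      (hv' : deg G v' ≤ 2) (t : Fin 3) : FamilyBk (k + 1) (addK23 G v' t)
  | iso {k : ℕ} {V W : Type} {G : SimpleGraph V} {H : SimpleGraph W}
      (e : G ≃g H) (hG : FamilyBk k G) : FamilyBk k H

/-!
Both invariants grow additively under `O₁`, so the theorem follows by induction from the base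
graph (`i = 3`, `w = 22`, checked by computation).

Weight: the new `K_{2,3}` has degree sequence `3, 3 | 3, 2, 2`, contributing `17`, while the
attachment vertex `v'` (of degree `1` or `2`, never `0` since no vertex of a graph in `𝓑` is
isolated) gains one edge and loses `1`; in total `w` grows by `16`.

Independent domination: an independent dominating set of `G` extends by the `2`-side of the new
`K_{2,3}`. Conversely, let `S'` be one of the new graph, with trace `S` on `G` and `T` on the
`K_{2,3}`. Then `T` is either the `2`-side or the `3`-side minus possibly the attachment vertex,
so `|T| ≥ 2`; `S` dominates `G` except possibly at `v'`. If `v'` is not dominated by `S`, it is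
dominated by the attachment vertex, so `T` is the full `3`-side and `S ∪ {v'}` is an independent
dominating set of `G` of size at most `|S'| - 2`.
-/

section Invariance

variable {V W : Type*} {G : SimpleGraph V} {H : SimpleGraph W}

lemma deg_iso (e : G ≃g H) (v : V) : deg H (e v) = deg G v := by
  rw [deg, deg, ← e.image_neighborSet, Set.ncard_image_of_injective _ e.injective]

lemma nDeg_iso (e : G ≃g H) (j : ℕ) : nDeg H j = nDeg G j := by
  have : {w | deg H w = j} = e '' {v | deg G v = j} := by
    ext w
    obtain ⟨v, rfl⟩ := e.surjective w
    simp [deg_iso, e.injective.eq_iff]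
  rw [nDeg, nDeg, this, Set.ncard_image_of_injective _ e.injective]

lemma weight_iso (e : G ≃g H) : weight H = weight G := by
  simp only [weight, nDeg_iso e]

lemma IsIDSet.image (e : G ≃g H) {S : Set V} (hS : IsIDSet G S) : IsIDSet H (e '' S) := by
  refine ⟨?_, fun w hw => ?_⟩
  · rintro _ ⟨u, hu, rfl⟩ _ ⟨v, hv, rfl⟩
    rw [e.map_adj_iff]
    exact hS.1 u hu v hv
  · obtain ⟨v, rfl⟩ := e.surjective w
    obtain ⟨u, hu, huv⟩ := hS.2 v fun hv => hw ⟨v, hv, rfl⟩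
    exact ⟨e u, ⟨u, hu, rfl⟩, e.map_adj_iff.2 huv⟩

lemma iNum_iso (e : G ≃g H) : iNum H = iNum G := by
  unfold iNum
  congr 1
  ext n
  constructor
  · rintro ⟨S, hS, rfl⟩
    exact ⟨e.symm '' S, hS.image e.symm, Set.ncard_image_of_injective _ e.symm.injective⟩
  · rintro ⟨S, hS, rfl⟩
    exact ⟨e '' S, hS.image e, Set.ncard_image_of_injective _ e.injective⟩

end Invariance

section IndependentDomination

variable {V : Type*} {G : SimpleGraph V}

lemma isIDSet_of_maximal_isIndepSet {S : Set V} (hS : Maximal G.IsIndepSet S) :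
    IsIDSet G S := by
  refine ⟨fun u hu v hv huv => hS.1 hu hv (G.ne_of_adj huv) huv, fun v hv => ?_⟩
  by_contra! hnot
  refine hv (hS.mem_of_prop_insert ?_)
  exact hS.1.insert_of_notMem hv fun u hu => ⟨fun h => hnot u hu h.symm, hnot u hu⟩

lemma exists_isIDSet [Finite V] (G : SimpleGraph V) : ∃ S, IsIDSet G S := by
  obtain ⟨S, -, hS⟩ := (Set.toFinite {S : Set V | G.IsIndepSet S}).exists_le_maximal
    (a := ∅) (by simp)
  exact ⟨S, isIDSet_of_maximal_isIndepSet hS⟩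

lemma iNum_le {S : Set V} (hS : IsIDSet G S) : iNum G ≤ S.ncard :=
  Nat.sInf_le ⟨S, hS, rfl⟩

lemma exists_isIDSet_ncard_eq_iNum [Finite V] (G : SimpleGraph V) :
    ∃ S, IsIDSet G S ∧ S.ncard = iNum G := by
  obtain ⟨S, hS⟩ := exists_isIDSet G
  exact Nat.sInf_mem (s := {n | ∃ S : Set V, IsIDSet G S ∧ S.ncard = n}) ⟨S.ncard, S, hS, rfl⟩

lemma isIDSet_insert_of_forall_not_adj {S : Set V} {v : V}
    (hind : ∀ u ∈ S, ∀ w ∈ S, ¬G.Adj u w) (hdom : ∀ w ∉ S, w ≠ v → ∃ u ∈ S, G.Adj u w)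
    (hv : ∀ u ∈ S, ¬G.Adj u v) :
    IsIDSet G (insert v S) := by
  refine ⟨?_, fun w hw => ?_⟩
  · rintro u (rfl | hu) w (rfl | hw) huw
    · exact G.irrefl huw
    · exact hv w hw huw.symm
    · exact hv u hu huw
    · exact hind u hu w hw huw
  · rw [Set.mem_insert_iff, not_or] at hw
    obtain ⟨u, hu, huw⟩ := hdom w hw.2 hw.1
    exact ⟨u, Set.mem_insert_of_mem v hu, huw⟩

lemma isIDSet_coe_iff (F : Finset V) :
    IsIDSet G F ↔ (∀ u ∈ F, ∀ v ∈ F, ¬G.Adj u v) ∧ ∀ v ∉ F, ∃ u ∈ F, G.Adj u v := by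
  simp only [IsIDSet, Finset.mem_coe]

end IndependentDomination

section Weight

variable {V : Type*}

def degWeight : ℕ → ℕ
  | 0 => 8
  | 1 => 5
  | 2 => 4
  | 3 => 3
  | _ => 0

lemma degWeight_eq_ite (d : ℕ) : degWeight d =
    8 * (if d = 0 then 1 else 0) + 5 * (if d = 1 then 1 else 0) +
      4 * (if d = 2 then 1 else 0) + 3 * (if d = 3 then 1 else 0) := by
  match d with
  | 0 | 1 | 2 | 3 | _ + 4 => simp [degWeight]

lemma weight_eq_sum [Fintype V] (G : SimpleGraph V) :
    weight G = ∑ v, degWeight (deg G v) := by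
  classical
  have hn : ∀ j, nDeg G j = ∑ v, if deg G v = j then 1 else 0 := fun j => by
    rw [nDeg, Set.ncard_eq_toFinset_card', Set.toFinset_ofPred, Finset.card_filter]
  simp only [weight, hn, degWeight_eq_ite, Finset.sum_add_distrib, Finset.mul_sum]

end Weight

lemma deg_eq_degree {V : Type*} [Fintype V] (G : SimpleGraph V) [DecidableRel G.Adj] (v : V) :
    deg G v = G.degree v := by
  rw [deg, Set.ncard_eq_toFinset_card', ← card_neighborFinset_eq_degree, neighborFinset]

section Base

instance : DecidableRel baseGraph.Adj := fun a b =>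
  decidable_of_iff _ (fromRel_adj _ a b).symm

lemma deg_baseGraph_pos (v : Fin 6) : 0 < deg baseGraph v := by
  rw [deg_eq_degree]
  revert v
  decide

lemma weight_baseGraph : weight baseGraph = 22 := by
  simp only [weight_eq_sum, deg_eq_degree]
  decide

lemma iNum_baseGraph : iNum baseGraph = 3 := by
  have hIDS : IsIDSet baseGraph ↑({0, 1, 5} : Finset (Fin 6)) := by
    rw [isIDSet_coe_iff]
    decide
  have hmin : ∀ F : Finset (Fin 6), IsIDSet baseGraph ↑F → 3 ≤ F.card := by
    simp only [isIDSet_coe_iff]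
    decide
  refine le_antisymm (by simpa using iNum_le hIDS) ?_
  obtain ⟨S, hS, hcard⟩ := exists_isIDSet_ncard_eq_iNum baseGraph
  obtain ⟨F, rfl⟩ := S.toFinite.exists_finset_coe
  rw [← hcard, Set.ncard_coe_finset]
  exact hmin F hS

end Base

lemma ncard_eq_ncard_preimage_inl_add_ncard_preimage_inr {α β : Type*} [Finite α] [Finite β]
    (s : Set (α ⊕ β)) : s.ncard = (Sum.inl ⁻¹' s).ncard + (Sum.inr ⁻¹' s).ncard := by
  conv_lhs => rw [← Set.image_preimage_inl_union_image_preimage_inr s]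
  rw [Set.ncard_union_eq Set.disjoint_image_inl_image_inr,
    Set.ncard_image_of_injective _ Sum.inl_injective,
    Set.ncard_image_of_injective _ Sum.inr_injective]

@[simp] lemma completeBipartiteGraph_neighborSet_inl {V W : Type*} (v : V) :
    (completeBipartiteGraph V W).neighborSet (.inl v) = Set.range Sum.inr := by
  ext (_ | _) <;> simp

@[simp] lemma completeBipartiteGraph_neighborSet_inr {V W : Type*} (w : W) :
    (completeBipartiteGraph V W).neighborSet (.inr w) = Set.range Sum.inl := by
  ext (_ | _) <;> simp

local notation "K₂₃" => completeBipartiteGraph (Fin 2) (Fin 3)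

/- An independent set of `K_{2,3}` dominating every vertex except possibly `inr t` is the
`2`-side or the `3`-side, the latter possibly without `inr t`. -/
set_option synthInstance.maxSize 1024 in
lemma completeBipartiteGraph_two_three_ncard_bounds (T : Set (Fin 2 ⊕ Fin 3)) (t : Fin 3)
    (hind : ∀ x ∈ T, ∀ y ∈ T, ¬(K₂₃).Adj x y)
    (hdom : ∀ x ∉ T, x ≠ .inr t → ∃ y ∈ T, (K₂₃).Adj y x) :
    2 ≤ T.ncard ∧ (.inr t ∈ T → 3 ≤ T.ncard) := by
  obtain ⟨F, rfl⟩ := T.toFinite.exists_finset_coe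
  simp only [Finset.mem_coe, Set.ncard_coe_finset, completeBipartiteGraph_adj] at *
  revert F t
  decide

section AddK23

variable {V : Type*} {G : SimpleGraph V} {v' : V} {t : Fin 3}

@[simp] lemma addK23_adj_inl_inl {a b : V} :
    (addK23 G v' t).Adj (.inl a) (.inl b) ↔ G.Adj a b := by
  simpa [addK23, G.adj_comm b a] using G.ne_of_adj

@[simp] lemma addK23_adj_inl_inr {a : V} {x : Fin 2 ⊕ Fin 3} :
    (addK23 G v' t).Adj (.inl a) (.inr x) ↔ a = v' ∧ x = .inr t := by
  simp [addK23]

@[simp] lemma addK23_adj_inr_inl {a : V} {x : Fin 2 ⊕ Fin 3} :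
    (addK23 G v' t).Adj (.inr x) (.inl a) ↔ a = v' ∧ x = .inr t := by
  rw [adj_comm, addK23_adj_inl_inr]

@[simp] lemma addK23_adj_inr_inr {x y : Fin 2 ⊕ Fin 3} :
    (addK23 G v' t).Adj (.inr x) (.inr y) ↔ (K₂₃).Adj x y := by
  cases x <;> cases y <;> simp [addK23] <;> omega

variable [Finite V]

lemma deg_addK23_inl_of_ne {a : V} (ha : a ≠ v') : deg (addK23 G v' t) (.inl a) = deg G a := by
  have hl : Sum.inl ⁻¹' (addK23 G v' t).neighborSet (.inl a) = G.neighborSet a := by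
    ext; simp
  have hr : Sum.inr ⁻¹' (addK23 G v' t).neighborSet (.inl a) = ∅ := by
    ext; simp [ha]
  rw [deg, ncard_eq_ncard_preimage_inl_add_ncard_preimage_inr, hl, hr, Set.ncard_empty,
    add_zero, deg]

lemma deg_addK23_inl_self : deg (addK23 G v' t) (.inl v') = deg G v' + 1 := by
  have hl : Sum.inl ⁻¹' (addK23 G v' t).neighborSet (.inl v') = G.neighborSet v' := by
    ext; simp
  have hr : Sum.inr ⁻¹' (addK23 G v' t).neighborSet (.inl v') = {.inr t} := by
    ext; simp
  rw [deg, ncard_eq_ncard_preimage_inl_add_ncard_preimage_inr, hl, hr, Set.ncard_singleton,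
    deg]

lemma deg_addK23_inr (x : Fin 2 ⊕ Fin 3) :
    deg (addK23 G v' t) (.inr x) =
      (if x.isLeft then 3 else 2) + if x = .inr t then 1 else 0 := by
  have hl : Sum.inl ⁻¹' (addK23 G v' t).neighborSet (.inr x) =
      if x = .inr t then {v'} else ∅ := by
    split_ifs with h <;> ext <;> simp [h]
  have hr : Sum.inr ⁻¹' (addK23 G v' t).neighborSet (.inr x) = (K₂₃).neighborSet x := by
    ext; simp
  rw [deg, ncard_eq_ncard_preimage_inl_add_ncard_preimage_inr, hl, hr, add_comm]
  rcases x with i | j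
  · simp [Set.ncard_range_of_injective Sum.inr_injective]
  · by_cases h : j = t <;> simp [h, Set.ncard_range_of_injective Sum.inl_injective]

lemma deg_addK23_pos (hpos : ∀ v, 0 < deg G v) (w : V ⊕ (Fin 2 ⊕ Fin 3)) :
    0 < deg (addK23 G v' t) w := by
  rcases w with a | x
  · rcases eq_or_ne a v' with rfl | ha
    · rw [deg_addK23_inl_self]
      omega
    · rw [deg_addK23_inl_of_ne ha]
      exact hpos a
  · rw [deg_addK23_inr]
    split_ifs <;> omega

lemma weight_addK23 (h₀ : 0 < deg G v') (h₂ : deg G v' ≤ 2) :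
    weight (addK23 G v' t) = weight G + 16 := by
  classical
  cases nonempty_fintype V
  have hK : ∑ x : Fin 2 ⊕ Fin 3,
      degWeight ((if x.isLeft then 3 else 2) + if x = .inr t then 1 else 0) = 17 := by
    revert t; decide
  have hrest : ∑ a ∈ {v'}ᶜ, degWeight (deg (addK23 G v' t) (.inl a)) =
      ∑ a ∈ {v'}ᶜ, degWeight (deg G a) :=
    Finset.sum_congr rfl fun a ha => by rw [deg_addK23_inl_of_ne (by simpa using ha)]
  have hv' : degWeight (deg G v' + 1) + 1 = degWeight (deg G v') := by
    interval_cases deg G v' <;> rfl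
  rw [weight_eq_sum, weight_eq_sum, Fintype.sum_sum_type]
  simp only [deg_addK23_inr, hK]
  rw [Fintype.sum_eq_add_sum_compl v', Fintype.sum_eq_add_sum_compl v' (fun a => degWeight _),
    hrest, deg_addK23_inl_self]
  omega

lemma iNum_addK23_le : iNum (addK23 G v' t) ≤ iNum G + 2 := by
  obtain ⟨S, hS, hcard⟩ := exists_isIDSet_ncard_eq_iNum G
  set S' : Set (V ⊕ (Fin 2 ⊕ Fin 3)) := Sum.inl '' S ∪ Sum.inr '' Set.range Sum.inl
  have hS' : IsIDSet (addK23 G v' t) S' := by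
    refine ⟨?_, ?_⟩
    · rintro _ (⟨a, ha, rfl⟩ | ⟨_, ⟨i, rfl⟩, rfl⟩) _ (⟨b, hb, rfl⟩ | ⟨_, ⟨j, rfl⟩, rfl⟩)
      · simpa using hS.1 a ha b hb
      all_goals simp
    · rintro (a | (i | j)) hw
      · obtain ⟨b, hb, hba⟩ := hS.2 a fun ha => hw (.inl ⟨a, ha, rfl⟩)
        exact ⟨.inl b, .inl ⟨b, hb, rfl⟩, addK23_adj_inl_inl.2 hba⟩
      · exact absurd (.inr ⟨_, ⟨i, rfl⟩, rfl⟩) hw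
      · exact ⟨.inr (.inl 0), .inr ⟨_, ⟨0, rfl⟩, rfl⟩, by simp⟩
  have hcard' : S'.ncard = S.ncard + 2 := by
    rw [ncard_eq_ncard_preimage_inl_add_ncard_preimage_inr, Set.preimage_union,
      Set.preimage_union, Set.preimage_inl_image_inr, Set.preimage_inr_image_inl,
      Set.union_empty, Set.empty_union, Sum.inl_injective.preimage_image,
      Sum.inr_injective.preimage_image, Set.ncard_range_of_injective Sum.inl_injective,
      Nat.card_eq_fintype_card, Fintype.card_fin]
  exact (iNum_le hS').trans (by omega)

lemma iNum_add_two_le_ncard_of_isIDSet_addK23 {S' : Set (V ⊕ (Fin 2 ⊕ Fin 3))}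
    (hS' : IsIDSet (addK23 G v' t) S') : iNum G + 2 ≤ S'.ncard := by
  set S := Sum.inl ⁻¹' S'
  set T := Sum.inr ⁻¹' S'
  have hcard : S'.ncard = S.ncard + T.ncard :=
    ncard_eq_ncard_preimage_inl_add_ncard_preimage_inr S'
  have hindS : ∀ a ∈ S, ∀ b ∈ S, ¬G.Adj a b := fun a ha b hb hab =>
    hS'.1 _ ha _ hb (addK23_adj_inl_inl.2 hab)
  have hdomS : ∀ a ∉ S, a ≠ v' → ∃ b ∈ S, G.Adj b a := by
    intro a ha hav
    obtain ⟨_ | x, hu, hadj⟩ := hS'.2 (.inl a) ha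
    · exact ⟨_, hu, addK23_adj_inl_inl.1 hadj⟩
    · exact absurd (addK23_adj_inr_inl.1 hadj).1 hav
  have hindT : ∀ x ∈ T, ∀ y ∈ T, ¬(K₂₃).Adj x y := fun x hx y hy hxy =>
    hS'.1 _ hx _ hy (addK23_adj_inr_inr.2 hxy)
  have hdomT : ∀ x ∉ T, x ≠ .inr t → ∃ y ∈ T, (K₂₃).Adj y x := by
    intro x hx hxt
    obtain ⟨_ | y, hu, hadj⟩ := hS'.2 (.inr x) hx
    · exact absurd (addK23_adj_inl_inr.1 hadj).2 hxt
    · exact ⟨y, hu, addK23_adj_inr_inr.1 hadj⟩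
  obtain ⟨hT₂, hT₃⟩ := completeBipartiteGraph_two_three_ncard_bounds T t hindT hdomT
  by_cases hv' : v' ∈ S ∨ ∃ b ∈ S, G.Adj b v'
  · have hS : IsIDSet G S := ⟨hindS, fun a ha => by
      by_cases hav : a = v'
      · subst hav
        exact hv'.resolve_left ha
      · exact hdomS a ha hav⟩
    have := iNum_le hS
    omega
  · push Not at hv'
    have htT : .inr t ∈ T := by
      obtain ⟨_ | x, hu, hadj⟩ := hS'.2 (.inl v') hv'.1
      · exact absurd (addK23_adj_inl_inl.1 hadj) (hv'.2 _ hu)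
      · obtain ⟨-, rfl⟩ := addK23_adj_inr_inl.1 hadj
        exact hu
    have := iNum_le (isIDSet_insert_of_forall_not_adj hindS hdomS hv'.2)
    have := Set.ncard_insert_le v' S
    have := hT₃ htT
    omega

lemma iNum_addK23 : iNum (addK23 G v' t) = iNum G + 2 := by
  obtain ⟨S', hS', hcard⟩ := exists_isIDSet_ncard_eq_iNum (addK23 G v' t)
  exact le_antisymm iNum_addK23_le (hcard ▸ iNum_add_two_le_ncard_of_isIDSet_addK23 hS')

end AddK23

theorem FamilyBk.finite_deg_pos_iNum_weight {k : ℕ} {V : Type} {G : SimpleGraph V}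
    (hG : FamilyBk k G) :
    Finite V ∧ (∀ v, 0 < deg G v) ∧ iNum G = 2 * k + 1 ∧ weight G = 16 * k + 6 := by
  induction hG with
  | base => exact ⟨inferInstance, deg_baseGraph_pos, iNum_baseGraph, weight_baseGraph⟩
  | extend _ v' hv' t ih =>
    obtain ⟨_, hpos, hi, hw⟩ := ih
    exact ⟨inferInstance, deg_addK23_pos hpos, by rw [iNum_addK23, hi]; ring,
      by rw [weight_addK23 (hpos v') hv', hw]; ring⟩
  | iso e _ ih =>
    obtain ⟨_, hpos, hi, hw⟩ := ih
    refine ⟨.of_equiv _ e.toEquiv, fun w => ?_, by rw [iNum_iso e, hi], by rw [weight_iso e, hw]⟩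
    rw [← e.apply_symm_apply w, deg_iso]
    exact hpos _

theorem statement9_general {V : Type} (G : SimpleGraph V) (k : ℕ)
    (hG : FamilyBk k G) :
    iNum G = 2 * k + 1 ∧ weight G = 16 * k + 6 ∧ 8 * iNum G = weight G + 2 := by
  obtain ⟨-, -, hi, hw⟩ := hG.finite_deg_pos_iNum_weight
  exact ⟨hi, hw, by rw [hi, hw]; ring⟩

/-- **Proposition cB(a).** If `G ∈ 𝓑` is constructed from the base graph
by `k − 1` applications of the operation `O₁` (`k ≥ 1`), then `i(G) = 2k + 1`,
`w(G) = 16k + 6`, and consequently `8·i(G) = w(G) + 2`. -/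
theorem statement9 {V : Type} (G : SimpleGraph V) (k : ℕ) (hk : 1 ≤ k)
    (hG : FamilyBk k G) :
    iNum G = 2 * k + 1 ∧ weight G = 16 * k + 6 ∧ 8 * iNum G = weight G + 2 :=
  statement9_general G k hG

end PaperIndepDom
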